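/- Let A ∈ F^{n×n} with zero forcing set Z of size k and core matrix B ∈ F^{k×k}. Then rank(A) = (n − k) + rank(B). -/

import Mathlib

open Matrix

section ZeroForcing

variable {V : Type*}

/-- The blue-coloring closure of the zero forcing process on a directed graph with
edge relation `E`, starting from the initially blue set `Z`:  a blue vertex `u` all of
whose out-neighbors except `v` are already blue forces `v` to become blue. -/
inductive Blue (E : V → V → Prop) (Z : Set V) : V → Prop
  | init {v : V} : v ∈ Z → Blue E Z v
  | force {u v : V} : Blue E Z u → E u v →
      (∀ w, E u w → w ≠ v → Blue E Z w) → Blue E Z v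

/-- `Z` is a zero forcing set if the forcing process colors every vertex blue. -/
def IsZeroForcingSet (E : V → V → Prop) (Z : Set V) : Prop := ∀ v, Blue E Z v

end ZeroForcing

section ForcingAlg

variable {F : Type*} [Field F] {n : ℕ}

/-- The off-diagonal adjacency pattern of a matrix: `u → v` iff `u ≠ v` and `A u v ≠ 0`. -/
def adjOf (A : Matrix (Fin n) (Fin n) F) (u v : Fin n) : Prop := u ≠ v ∧ A u v ≠ 0

/-- A chronological list of forces for the zero forcing set `Z` of `A`:  `π` lists the
vertices outside `Z` in the order they are forced, and `par u` is the forcing parent of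
`u` (the vertex that forces `u`). -/
structure ForcingOrder (A : Matrix (Fin n) (Fin n) F) (Z : Finset (Fin n)) where
  π : List (Fin n)
  par : Fin n → Fin n
  nodup : π.Nodup
  mem_iff : ∀ v, v ∈ π ↔ v ∉ Z
  par_ne_self : ∀ u ∈ π, par u ≠ u
  par_edge : ∀ u ∈ π, A (par u) u ≠ 0
  par_blue : ∀ u ∈ π, par u ∈ Z ∨ (par u ∈ π ∧ π.idxOf (par u) < π.idxOf u)
  others_blue : ∀ u ∈ π, ∀ w, w ≠ par u → w ≠ u → A (par u) w ≠ 0 →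
      (w ∈ Z ∨ (w ∈ π ∧ π.idxOf w < π.idxOf u))
  par_inj : ∀ u ∈ π, ∀ v ∈ π, par u = par v → u = v

/-- One step of the forcing algorithm: `x_u ← (b_{u↑} − A_{u↑,*} x) / A_{u↑,u}`. -/
def forcingStep (A : Matrix (Fin n) (Fin n) F) (par : Fin n → Fin n)
    (b : Fin n → F) (x : Fin n → F) (u : Fin n) : Fin n → F :=
  Function.update x u ((b (par u) - A (par u) ⬝ᵥ x) / A (par u) u)

/-- The forcing algorithm `Forcing(A, Z, b)`: starting from `x = 0`, iterate the forcing
update over the vertices outside `Z` in forcing order. -/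
def Forcing (A : Matrix (Fin n) (Fin n) F) {Z : Finset (Fin n)}
    (fo : ForcingOrder A Z) (b : Fin n → F) : Fin n → F :=
  fo.π.foldl (forcingStep A fo.par b) 0

/-- The map `R(b) = b − A · Forcing(A, Z, b)`. -/
def Rmap (A : Matrix (Fin n) (Fin n) F) {Z : Finset (Fin n)}
    (fo : ForcingOrder A Z) (b : Fin n → F) : Fin n → F :=
  b - A.mulVec (Forcing A fo b)

/-- A vertex is a terminal if it has no forcing child. -/
def IsTerminal {A : Matrix (Fin n) (Fin n) F} {Z : Finset (Fin n)}
    (fo : ForcingOrder A Z) (v : Fin n) : Prop :=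
  ∀ u ∈ fo.π, fo.par u ≠ v

instance {A : Matrix (Fin n) (Fin n) F} {Z : Finset (Fin n)} (fo : ForcingOrder A Z) :
    DecidablePred (IsTerminal fo) := fun v =>
  decidable_of_iff (∀ u ∈ fo.π, fo.par u ≠ v) Iff.rfl

/-- The core matrix `B = (R A)_{T,Z}`: its column indexed by `z ∈ Z` is `(R a_z)_T`,
where `a_z` is the `z`-th column of `A` and `T` is the terminal set. -/
def coreMatrix (A : Matrix (Fin n) (Fin n) F) {Z : Finset (Fin n)}
    (fo : ForcingOrder A Z) :
    Matrix {v // IsTerminal fo v} {v // v ∈ Z} F :=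
  Matrix.of fun t z => Rmap A fo (fun i => A i z.1) t.1

end ForcingAlg

/-!
Run in forcing order, the forcing algorithm solves the triangular system formed by the rows of
the forcing parents, so `Forcing (A x) = x` whenever `x` vanishes on `Z`, and `R b = 0` exactly
when `b = A x` for such an `x`. Hence `ker R` lies in the column space of `A` and is the
injective image under `A` of the `(n - |Z|)`-dimensional space of vectors vanishing on `Z`.
Rank–nullity for `R` on the column space gives `rank A = rank (R A) + (n - |Z|)`, and `R A` is
the core matrix padded by zero rows (non-terminals, whose parent rows `Forcing` satisfies) and
zero columns (outside `Z`, since `R` kills `A x` for such `x`).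
-/

open Module

theorem Fintype.sum_subtype_ite_eq {ι M : Type*} [DecidableEq ι] [AddCommMonoid M]
    (p : ι → Prop) [DecidablePred p] [Fintype {x // p x}] (i : ι) (g : {x // p x} → M) :
    ∑ t : {x // p x}, (if t.1 = i then g t else 0) = if h : p i then g ⟨i, h⟩ else 0 := by
  split_ifs with hi
  · rw [Fintype.sum_eq_single ⟨i, hi⟩ fun t ht => if_neg fun h => ht (Subtype.ext h),
      if_pos rfl]
  · exact Finset.sum_eq_zero fun t _ => if_neg fun h : t.1 = i => hi (h ▸ t.2)

theorem Matrix.rank_eq_rank_submatrix_of_apply_ne_zero {R m n : Type*} [Field R] [Fintype m]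
    [Fintype n] [DecidableEq m] [DecidableEq n] (M : Matrix m n R) (p : m → Prop) (q : n → Prop)
    [Fintype {i // p i}] [Fintype {j // q j}] (h : ∀ i j, M i j ≠ 0 → p i ∧ q j) :
    M.rank =
      (M.submatrix (Subtype.val : {i // p i} → m) (Subtype.val : {j // q j} → n)).rank := by
  classical
  refine le_antisymm ?_ (rank_submatrix_le _ _ _)
  let P : Matrix m {i // p i} R := (1 : Matrix m m R).submatrix id Subtype.val
  let Q : Matrix {j // q j} n R := (1 : Matrix n n R).submatrix Subtype.val id
  have hM : M = P * M.submatrix (Subtype.val : {i // p i} → m) (Subtype.val : {j // q j} → n) *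
      Q := by
    ext i j
    simp only [P, Q, mul_apply, submatrix_apply, one_apply, id, ite_mul, one_mul, zero_mul,
      mul_ite, mul_one, mul_zero, @eq_comm _ i, Fintype.sum_subtype_ite_eq]
    by_cases hij : M i j = 0
    · simp [hij]
    · simp [h i j hij]
  calc M.rank = _ := congrArg Matrix.rank hM
    _ ≤ _ := (rank_mul_le_left _ _).trans (rank_mul_le_right _ _)

theorem LinearMap.finrank_range_eq_finrank_range_comp_add_finrank_ker {K V W U : Type*} [Field K]
    [AddCommGroup V] [Module K V] [AddCommGroup W] [Module K W] [FiniteDimensional K W]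
    [AddCommGroup U] [Module K U] (f : V →ₗ[K] W) (g : W →ₗ[K] U) (h : ker g ≤ range f) :
    finrank K (range f) = finrank K (range (g ∘ₗ f)) + finrank K (ker g) := by
  rw [← (Submodule.comapSubtypeEquivOfLe h).finrank_eq, ← ker_comp, range_comp,
    ← range_domRestrict]
  exact (finrank_range_add_finrank_ker (g.domRestrict (range f))).symm

theorem Pi.finrank_iInf_ker_proj {K ι : Type*} [Field K] [Fintype ι] [DecidableEq ι]
    (s : Finset ι) :
    finrank K (⨅ i ∈ (s : Set ι), LinearMap.ker (LinearMap.proj i : (ι → K) →ₗ[K] K) :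
      Submodule K (ι → K)) =
      Fintype.card ι - s.card := by
  rw [(LinearMap.iInfKerProjEquiv K (fun _ : ι => K) (I := (↑s)ᶜ) disjoint_compl_left
    (by simp)).finrank_eq, finrank_fintype_fun_eq_card]
  simp [Finset.filter_not, Finset.card_univ_sdiff]

open LinearMap

section ForcingStep

variable {F : Type*} [Field F] {n : ℕ} (A : Matrix (Fin n) (Fin n) F) (par : Fin n → Fin n)

theorem foldl_forcingStep_apply_of_notMem (b : Fin n → F) :
    ∀ (l : List (Fin n)) (x : Fin n → F) {v : Fin n}, v ∉ l →
      l.foldl (forcingStep A par b) x v = x v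
  | [], _, _, _ => rfl
  | u :: l, x, v, hv => by
    rw [List.mem_cons, not_or] at hv
    rw [List.foldl_cons, foldl_forcingStep_apply_of_notMem b l _ hv.2, forcingStep,
      Function.update_of_ne hv.1]

theorem foldl_forcingStep_add (b₁ b₂ : Fin n → F) :
    ∀ (l : List (Fin n)) (x₁ x₂ : Fin n → F),
      l.foldl (forcingStep A par (b₁ + b₂)) (x₁ + x₂) =
        l.foldl (forcingStep A par b₁) x₁ + l.foldl (forcingStep A par b₂) x₂
  | [], _, _ => rfl
  | u :: l, x₁, x₂ => by
    have hstep : forcingStep A par (b₁ + b₂) (x₁ + x₂) u =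
        forcingStep A par b₁ x₁ u + forcingStep A par b₂ x₂ u := by
      rw [forcingStep, forcingStep, forcingStep, ← Function.update_add]
      congr 1
      rw [Pi.add_apply, dotProduct_add]
      ring
    rw [List.foldl_cons, hstep, foldl_forcingStep_add b₁ b₂ l]; rfl

theorem foldl_forcingStep_smul (c : F) (b : Fin n → F) :
    ∀ (l : List (Fin n)) (x : Fin n → F),
      l.foldl (forcingStep A par (c • b)) (c • x) = c • l.foldl (forcingStep A par b) x
  | [], _ => rfl
  | u :: l, x => by
    have hstep : forcingStep A par (c • b) (c • x) u = c • forcingStep A par b x u := by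
      rw [forcingStep, forcingStep, ← Function.update_smul]
      congr 1
      rw [Pi.smul_apply, dotProduct_smul, smul_eq_mul, smul_eq_mul]
      ring
    rw [List.foldl_cons, hstep, foldl_forcingStep_smul c b l]; rfl

end ForcingStep

namespace ForcingOrder

variable {F : Type*} [Field F] {n : ℕ} {A : Matrix (Fin n) (Fin n) F} {Z : Finset (Fin n)}
  (fo : ForcingOrder A Z) {u v w : Fin n}

/-- `fo.BlueBefore u w`: the vertex `w` is blue at the moment `u` is forced. -/
def BlueBefore (u w : Fin n) : Prop :=
  w ∈ Z ∨ (w ∈ fo.π ∧ fo.π.idxOf w < fo.π.idxOf u)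

theorem blueBefore_of_ne_of_apply_ne_zero (hu : u ∈ fo.π) (hwu : w ≠ u)
    (hw : A (fo.par u) w ≠ 0) : fo.BlueBefore u w := by
  by_cases hwp : w = fo.par u
  · exact hwp ▸ fo.par_blue u hu
  · exact fo.others_blue u hu w hwp hwu hw

theorem notMem_of_blueBefore {p q : List (Fin n)} (hπ : fo.π = p ++ u :: q)
    (hw : fo.BlueBefore u w) : w ∉ u :: q := by
  have hdisj := List.disjoint_of_nodup_append (hπ ▸ fo.nodup)
  intro hmem
  rcases hw with hw | ⟨-, hlt⟩
  · exact (fo.mem_iff w).mp (hπ ▸ List.mem_append_right p hmem) hw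
  · have hwp : w ∉ p := fun h => hdisj h hmem
    have hup : u ∉ p := fun h => hdisj h List.mem_cons_self
    rw [hπ, List.idxOf_append_of_notMem hwp, List.idxOf_append_of_notMem hup,
      List.idxOf_cons_self] at hlt
    omega

theorem row_par_dotProduct (hu : u ∈ fo.π) {y : Fin n → F}
    (hy : ∀ w, fo.BlueBefore u w → y w = 0) : A (fo.par u) ⬝ᵥ y = A (fo.par u) u * y u :=
  Fintype.sum_eq_single u fun w hwu => by
    by_cases hw : A (fo.par u) w = 0
    · rw [hw, zero_mul]
    · rw [hy w (fo.blueBefore_of_ne_of_apply_ne_zero hu hwu hw), mul_zero]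

/-- In forcing order the parent rows form a triangular system with pivots `A (par u) u ≠ 0`. -/
theorem eq_zero_of_row_par_dotProduct_eq_zero {y : Fin n → F} (hZ : ∀ v ∈ Z, y v = 0)
    (hrow : ∀ u ∈ fo.π, A (fo.par u) ⬝ᵥ y = 0) : y = 0 := by
  have hforced : ∀ k, ∀ u ∈ fo.π, fo.π.idxOf u = k → y u = 0 := by
    intro k
    induction k using Nat.strong_induction_on with
    | _ k ih =>
      rintro u hu rfl
      have hblue : ∀ w, fo.BlueBefore u w → y w = 0 := by
        rintro w (hw | ⟨hw, hlt⟩)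
        · exact hZ w hw
        · exact ih _ hlt w hw rfl
      have hrow_u := hrow u hu
      rw [fo.row_par_dotProduct hu hblue] at hrow_u
      exact (mul_eq_zero.mp hrow_u).resolve_left (fo.par_edge u hu)
  funext v
  by_cases hv : v ∈ fo.π
  · exact hforced _ v hv rfl
  · exact hZ v (by simpa [fo.mem_iff] using hv)

theorem forcing_apply_of_mem (b : Fin n → F) (hv : v ∈ Z) : Forcing A fo b v = 0 :=
  foldl_forcingStep_apply_of_notMem A fo.par b fo.π 0 fun h => (fo.mem_iff v).mp h hv

theorem row_par_dotProduct_forcing (b : Fin n → F) (hu : u ∈ fo.π) :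
    A (fo.par u) ⬝ᵥ Forcing A fo b = b (fo.par u) := by
  obtain ⟨p, q, hπ⟩ := List.append_of_mem hu
  have hdisj := List.disjoint_of_nodup_append (hπ ▸ fo.nodup)
  set xp := p.foldl (forcingStep A fo.par b) 0
  have hF : Forcing A fo b = (u :: q).foldl (forcingStep A fo.par b) xp := by
    rw [Forcing, hπ, List.foldl_append]
  have hxp : xp u = 0 :=
    foldl_forcingStep_apply_of_notMem A fo.par b p 0 fun h => hdisj h List.mem_cons_self
  have hFu : Forcing A fo b u = (b (fo.par u) - A (fo.par u) ⬝ᵥ xp) / A (fo.par u) u := by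
    have huq : u ∉ q := (List.nodup_cons.mp (List.Nodup.of_append_right (hπ ▸ fo.nodup))).1
    rw [hF, List.foldl_cons, foldl_forcingStep_apply_of_notMem A fo.par b q _ huq, forcingStep,
      Function.update_self]
  -- Before `u` is processed, every vertex the row of `par u` sees except `u` is settled.
  have hrow := fo.row_par_dotProduct hu (y := Forcing A fo b - xp) fun w hw => by
    rw [Pi.sub_apply, sub_eq_zero, hF]
    exact foldl_forcingStep_apply_of_notMem A fo.par b _ _ (fo.notMem_of_blueBefore hπ hw)
  rw [dotProduct_sub, Pi.sub_apply, hxp, sub_zero, hFu,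
    mul_div_cancel₀ _ (fo.par_edge u hu)] at hrow
  exact sub_left_injective hrow

theorem forcing_mulVec {x : Fin n → F} (hx : ∀ v ∈ Z, x v = 0) :
    Forcing A fo (A *ᵥ x) = x :=
  sub_eq_zero.mp <| fo.eq_zero_of_row_par_dotProduct_eq_zero
    (fun v hv => by rw [Pi.sub_apply, fo.forcing_apply_of_mem _ hv, hx v hv, sub_zero])
    fun u hu => by rw [dotProduct_sub, fo.row_par_dotProduct_forcing _ hu, sub_eq_zero]; rfl

noncomputable def forcingLin : (Fin n → F) →ₗ[F] Fin n → F where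
  toFun := Forcing A fo
  map_add' b₁ b₂ := by
    simpa [Forcing] using foldl_forcingStep_add A fo.par b₁ b₂ fo.π 0 0
  map_smul' c b := by
    simpa [Forcing] using foldl_forcingStep_smul A fo.par c b fo.π 0

noncomputable def rmapLin : (Fin n → F) →ₗ[F] Fin n → F :=
  LinearMap.id - A.mulVecLin ∘ₗ fo.forcingLin

theorem rmapLin_apply (b : Fin n → F) : fo.rmapLin b = Rmap A fo b := rfl

theorem rmap_apply_of_not_isTerminal (b : Fin n → F) (hv : ¬IsTerminal fo v) :
    Rmap A fo b v = 0 := by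
  obtain ⟨u, hu, rfl⟩ : ∃ u ∈ fo.π, fo.par u = v := by simpa [IsTerminal] using hv
  rw [Rmap, Pi.sub_apply, Matrix.mulVec, fo.row_par_dotProduct_forcing b hu, sub_self]

theorem rmap_eq_zero_iff (b : Fin n → F) :
    Rmap A fo b = 0 ↔ ∃ x, (∀ v ∈ Z, x v = 0) ∧ A *ᵥ x = b := by
  constructor
  · exact fun h => ⟨Forcing A fo b, fun v hv => fo.forcing_apply_of_mem b hv,
      (sub_eq_zero.mp h).symm⟩
  · rintro ⟨x, hx, rfl⟩
    rw [Rmap, fo.forcing_mulVec hx, sub_self]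

theorem ker_rmapLin :
    ker fo.rmapLin = (⨅ i ∈ (Z : Set (Fin n)), ker (proj i : (Fin n → F) →ₗ[F] F)).map
      A.mulVecLin := by
  ext b
  simp [rmapLin_apply, rmap_eq_zero_iff, Submodule.mem_iInf]

theorem finrank_ker_rmapLin : finrank F (ker fo.rmapLin) = n - Z.card := by
  set U : Submodule F (Fin n → F) := ⨅ i ∈ (Z : Set (Fin n)), ker (proj i)
  have hU : ∀ x ∈ U, ∀ v ∈ Z, x v = 0 := by simp [U, Submodule.mem_iInf]
  have hinj : Function.Injective (A.mulVecLin.domRestrict U) := fun x y hxy => by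
    rw [Subtype.ext_iff, ← fo.forcing_mulVec (hU x x.2), ← fo.forcing_mulVec (hU y y.2)]
    exact congrArg (Forcing A fo) hxy
  rw [ker_rmapLin, ← range_domRestrict, finrank_range_of_inj hinj, Pi.finrank_iInf_ker_proj,
    Fintype.card_fin]

theorem coreMatrix_eq_submatrix :
    coreMatrix A fo =
      (toMatrix' (fo.rmapLin ∘ₗ A.mulVecLin)).submatrix Subtype.val Subtype.val := by
  ext t z
  rw [submatrix_apply, toMatrix'_apply, LinearMap.comp_apply, Matrix.mulVecLin_apply,
    Matrix.mulVec_single_one]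
  rfl

theorem rank_coreMatrix :
    (coreMatrix A fo).rank = finrank F (range (fo.rmapLin ∘ₗ A.mulVecLin)) := by
  rw [coreMatrix_eq_submatrix, ← Matrix.rank_eq_rank_submatrix_of_apply_ne_zero, Matrix.rank,
    ← Matrix.toLin'_apply', Matrix.toLin'_toMatrix']
  intro i j hij
  rw [toMatrix'_apply, LinearMap.comp_apply, rmapLin_apply, Matrix.mulVecLin_apply] at hij
  refine ⟨by_contra fun hi => hij (fo.rmap_apply_of_not_isTerminal _ hi),
    by_contra fun hj => ?_⟩
  refine hij (congrFun ((fo.rmap_eq_zero_iff _).mpr ⟨_, fun v hv => ?_, rfl⟩) i)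
  exact Pi.single_eq_of_ne (ne_of_mem_of_not_mem hv hj) _

end ForcingOrder

theorem stmt19_general {F : Type*} [Field F] {n : ℕ} (A : Matrix (Fin n) (Fin n) F)
    (Z : Finset (Fin n))
    (fo : ForcingOrder A Z) :
    A.rank = (n - Z.card) + (coreMatrix A fo).rank := by
  have hker : ker fo.rmapLin ≤ range A.mulVecLin := fun b hb => by
    obtain ⟨x, -, hx⟩ := (fo.rmap_eq_zero_iff b).mp hb
    exact ⟨x, hx⟩
  rw [Matrix.rank, A.mulVecLin.finrank_range_eq_finrank_range_comp_add_finrank_ker _ hker,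
    fo.finrank_ker_rmapLin, fo.rank_coreMatrix, add_comm]

/-- `rank A = (n − k) + rank B`, where `B` is the core matrix of `A`
with respect to a zero forcing set `Z` of size `k`. -/
theorem stmt19 {F : Type*} [Field F] {n : ℕ} (A : Matrix (Fin n) (Fin n) F)
    (Z : Finset (Fin n)) (hZ : IsZeroForcingSet (adjOf A) ↑Z)
    (fo : ForcingOrder A Z) :
    A.rank = (n - Z.card) + (coreMatrix A fo).rank :=
  stmt19_general A Z fo
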